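/- arXiv:2602.08680 — 2 statements merged into one kernel-verified Lean document; each statement's English description precedes it below -/
import Mathlib

section
/- Let λ > 0, H ∈ (0,1), σ > 0, and define σ̄² = (σ²/(2λ^{2H})) ∫₀^∞ e^{−s} s^{2H} ds. Then for all t > 0, |σ² H (∫₀^t e^{−λz} z^{2H−1} dz + e^{−λt} ∫₀^t e^{−λ(t−z)} z^{2H−1} dz) − σ̄²| ≤ C (σ²/λ^{2H}) e^{−λt/2} for a constant C depending only on H. -/
/-!
Write `a = 2H`. Since `∫₀^∞ e^{-s} s^a ds = Γ(a + 1) = a Γ(a)` and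
`∫₀^∞ e^{-λz} z^{a-1} dz = Γ(a) / λ^a`, the limit `σ̄²` is `σ² H ∫₀^∞ e^{-λz} z^{a-1} dz`,
so the difference to be bounded is
`σ² H (e^{-λt} ∫₀^t e^{-λ(t-z)} z^{a-1} dz - ∫_t^∞ e^{-λz} z^{a-1} dz)`.
On `z > t` we have `e^{-λz} ≤ e^{-λt/2} e^{-λz/2}`, so the tail is at most
`2^a Γ(a) λ^{-a} e^{-λt/2}`. The first term is at most `e^{-λt} t^a / a = (λt)^a e^{-λt} / (a λ^a)`,
and `u^a e^{-u} ≤ (2a)^a e^{-u/2}` because `u / (2a) ≤ e^{u / (2a)}`.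
-/

open MeasureTheory Real Set

theorem rpow_mul_exp_neg_le {a u : ℝ} (ha : 0 < a) (hu : 0 ≤ u) :
    u ^ a * exp (-u) ≤ (2 * a) ^ a * exp (-u / 2) := by
  have h2a : 0 < 2 * a := by positivity
  have hlin : u ≤ 2 * a * exp (u / (2 * a)) :=
    calc u = 2 * a * (u / (2 * a)) := by field_simp
      _ ≤ 2 * a * exp (u / (2 * a)) := by gcongr; linarith [add_one_le_exp (u / (2 * a))]
  calc u ^ a * exp (-u) ≤ (2 * a * exp (u / (2 * a))) ^ a * exp (-u) := by gcongr
    _ = (2 * a) ^ a * exp (-u / 2) := by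
        rw [mul_rpow h2a.le (exp_pos _).le, ← exp_mul, mul_assoc, ← exp_add]
        congr 3
        field_simp; ring

section GammaKernel

variable {a b t : ℝ}

theorem integral_exp_neg_mul_mul_rpow_Ioi (ha : 0 < a) (hb : 0 < b) :
    ∫ z in Ioi (0:ℝ), exp (-b * z) * z ^ (a - 1) = Gamma a / b ^ a := by
  rw [div_eq_inv_mul, ← inv_rpow hb.le, ← one_div, ← integral_rpow_mul_exp_neg_mul_Ioi ha hb]
  refine setIntegral_congr_fun measurableSet_Ioi fun _ _ => ?_
  rw [neg_mul, mul_comm]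

theorem integrableOn_exp_neg_mul_mul_rpow_Ioi (ha : 0 < a) (hb : 0 < b) :
    IntegrableOn (fun z => exp (-b * z) * z ^ (a - 1)) (Ioi 0) :=
  .of_integral_ne_zero <| by
    rw [integral_exp_neg_mul_mul_rpow_Ioi ha hb]
    exact (div_pos (Gamma_pos_of_pos ha) (by positivity)).ne'

theorem setIntegral_Ioc_add_setIntegral_Ioi_exp_neg_mul_mul_rpow (ha : 0 < a) (hb : 0 < b)
    (ht : 0 ≤ t) :
    (∫ z in Ioc 0 t, exp (-b * z) * z ^ (a - 1)) + ∫ z in Ioi t, exp (-b * z) * z ^ (a - 1) =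
      Gamma a / b ^ a := by
  have hint := integrableOn_exp_neg_mul_mul_rpow_Ioi ha hb
  rw [← integral_exp_neg_mul_mul_rpow_Ioi ha hb, ← Ioc_union_Ioi_eq_Ioi ht,
    setIntegral_union (Ioc_disjoint_Ioi le_rfl) measurableSet_Ioi
      (hint.mono_set Ioc_subset_Ioi_self) (hint.mono_set (Ioi_subset_Ioi ht))]

theorem setIntegral_Ioi_exp_neg_mul_mul_rpow_nonneg (ht : 0 ≤ t) :
    0 ≤ ∫ z in Ioi t, exp (-b * z) * z ^ (a - 1) :=
  setIntegral_nonneg measurableSet_Ioi fun _ hz =>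
    mul_nonneg (exp_pos _).le (rpow_nonneg (ht.trans (le_of_lt hz)) _)

theorem setIntegral_Ioi_exp_neg_mul_mul_rpow_le (ha : 0 < a) (hb : 0 < b) (ht : 0 ≤ t) :
    ∫ z in Ioi t, exp (-b * z) * z ^ (a - 1) ≤ 2 ^ a * Gamma a / b ^ a * exp (-b * t / 2) := by
  have hb2 : 0 < b / 2 := half_pos hb
  have hint := integrableOn_exp_neg_mul_mul_rpow_Ioi ha hb2
  calc ∫ z in Ioi t, exp (-b * z) * z ^ (a - 1)
      ≤ ∫ z in Ioi t, exp (-b * t / 2) * (exp (-(b / 2) * z) * z ^ (a - 1)) := by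
        refine setIntegral_mono_on ((integrableOn_exp_neg_mul_mul_rpow_Ioi ha hb).mono_set
          (Ioi_subset_Ioi ht)) ((hint.mono_set (Ioi_subset_Ioi ht)).const_mul _)
          measurableSet_Ioi fun z (hz : t < z) => ?_
        rw [← mul_assoc, ← exp_add]
        gcongr
        · exact rpow_nonneg (ht.trans hz.le) _
        · nlinarith
    _ = exp (-b * t / 2) * ∫ z in Ioi t, exp (-(b / 2) * z) * z ^ (a - 1) :=
        integral_const_mul _ _
    _ ≤ exp (-b * t / 2) * ∫ z in Ioi 0, exp (-(b / 2) * z) * z ^ (a - 1) := by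
        refine mul_le_mul_of_nonneg_left
          (setIntegral_mono_set hint ?_ (Ioi_subset_Ioi ht).eventuallyLE) (exp_pos _).le
        filter_upwards [ae_restrict_mem measurableSet_Ioi] with z hz
        exact mul_nonneg (exp_pos _).le (rpow_nonneg (le_of_lt hz) _)
    _ = 2 ^ a * Gamma a / b ^ a * exp (-b * t / 2) := by
        rw [integral_exp_neg_mul_mul_rpow_Ioi ha hb2, div_rpow hb.le zero_le_two]
        field_simp

theorem setIntegral_Ioc_exp_neg_mul_sub_mul_rpow_nonneg :
    0 ≤ ∫ z in Ioc 0 t, exp (-b * (t - z)) * z ^ (a - 1) :=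
  setIntegral_nonneg measurableSet_Ioc fun _ hz =>
    mul_nonneg (exp_pos _).le (rpow_nonneg hz.1.le _)

theorem setIntegral_Ioc_exp_neg_mul_sub_mul_rpow_le (ha : 0 < a) (hb : 0 ≤ b) (ht : 0 ≤ t) :
    ∫ z in Ioc 0 t, exp (-b * (t - z)) * z ^ (a - 1) ≤ t ^ a / a := by
  have hrpow : ∫ z in Ioc 0 t, z ^ (a - 1) = t ^ a / a := by
    rw [← intervalIntegral.integral_of_le ht, integral_rpow (Or.inl (by linarith)),
      sub_add_cancel, zero_rpow ha.ne', sub_zero]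
  rw [← hrpow]
  refine integral_mono_of_nonneg ?_ ?_ ?_
  · filter_upwards [ae_restrict_mem measurableSet_Ioc] with z hz
    exact mul_nonneg (exp_pos _).le (rpow_nonneg hz.1.le _)
  · exact (intervalIntegral.intervalIntegrable_rpow' (by linarith)).1
  · filter_upwards [ae_restrict_mem measurableSet_Ioc] with z hz
    refine mul_le_of_le_one_left (rpow_nonneg hz.1.le _) (exp_le_one_iff.2 ?_)
    nlinarith [hz.2]

theorem exp_neg_mul_mul_setIntegral_Ioc_exp_neg_mul_sub_mul_rpow_le (ha : 0 < a) (hb : 0 < b)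
    (ht : 0 ≤ t) :
    exp (-b * t) * ∫ z in Ioc 0 t, exp (-b * (t - z)) * z ^ (a - 1) ≤
      (2 * a) ^ a / a / b ^ a * exp (-b * t / 2) := by
  have hscale : t ^ a = (b * t) ^ a / b ^ a := by
    rw [mul_rpow hb.le ht]; field_simp
  calc exp (-b * t) * ∫ z in Ioc 0 t, exp (-b * (t - z)) * z ^ (a - 1)
      ≤ exp (-b * t) * (t ^ a / a) := by
        gcongr; exact setIntegral_Ioc_exp_neg_mul_sub_mul_rpow_le ha hb.le ht
    _ = (b * t) ^ a * exp (-(b * t)) / a / b ^ a := by rw [hscale, neg_mul]; ring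
    _ ≤ (2 * a) ^ a * exp (-(b * t) / 2) / a / b ^ a := by
        gcongr ?_ / _ / _; exact rpow_mul_exp_neg_le ha (by positivity)
    _ = (2 * a) ^ a / a / b ^ a * exp (-b * t / 2) := by rw [neg_mul]; ring

end GammaKernel

/-- Exponential convergence of the variance of the fractional Ornstein–Uhlenbeck
process to its long-time limit σ̄² = (σ²/(2λ^{2H})) ∫₀^∞ e^{−s} s^{2H} ds, with a
constant depending only on H. -/
theorem stmt2 (H : ℝ) (hH : H ∈ Set.Ioo (0:ℝ) 1) :
    ∃ C > 0, ∀ lam σ t : ℝ, 0 < lam → 0 < σ → 0 < t →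
      |σ ^ 2 * H * ((∫ z in Set.Ioc (0:ℝ) t, Real.exp (-lam * z) * z ^ (2 * H - 1)) +
            Real.exp (-lam * t) *
              ∫ z in Set.Ioc (0:ℝ) t, Real.exp (-lam * (t - z)) * z ^ (2 * H - 1)) -
          (σ ^ 2 / (2 * lam ^ (2 * H))) * ∫ s in Set.Ioi (0:ℝ), Real.exp (-s) * s ^ (2 * H)|
        ≤ C * (σ ^ 2 / lam ^ (2 * H)) * Real.exp (-lam * t / 2) := by
  have ha : 0 < 2 * H := by linarith [hH.1]
  refine ⟨H * (2 ^ (2 * H) * Gamma (2 * H) + (2 * (2 * H)) ^ (2 * H) / (2 * H)),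
    mul_pos hH.1 (by positivity), fun lam σ t hlam _ ht => ?_⟩
  have hlimit : ∫ s in Ioi (0:ℝ), exp (-s) * s ^ (2 * H) = 2 * H * Gamma (2 * H) := by
    rw [← Gamma_add_one ha.ne', Gamma_eq_integral (by linarith), add_sub_cancel_right]
  have hsplit := setIntegral_Ioc_add_setIntegral_Ioi_exp_neg_mul_mul_rpow ha hlam ht.le
  have hT := setIntegral_Ioi_exp_neg_mul_mul_rpow_le ha hlam ht.le
  have hT0 := setIntegral_Ioi_exp_neg_mul_mul_rpow_nonneg (a := 2 * H) (b := lam) ht.le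
  have hX := exp_neg_mul_mul_setIntegral_Ioc_exp_neg_mul_sub_mul_rpow_le ha hlam ht.le
  have hX0 := mul_nonneg (exp_pos (-lam * t)).le
    (setIntegral_Ioc_exp_neg_mul_sub_mul_rpow_nonneg (a := 2 * H) (b := lam) (t := t))
  set I := ∫ z in Ioc 0 t, exp (-lam * z) * z ^ (2 * H - 1)
  set T := ∫ z in Ioi t, exp (-lam * z) * z ^ (2 * H - 1)
  set X := exp (-lam * t) * ∫ z in Ioc 0 t, exp (-lam * (t - z)) * z ^ (2 * H - 1)
  have hdiff : σ ^ 2 * H * (I + X) -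
      σ ^ 2 / (2 * lam ^ (2 * H)) * (2 * H * Gamma (2 * H)) = σ ^ 2 * H * (X - T) := by
    rw [eq_sub_of_add_eq hsplit]; field_simp; ring
  have hσH : 0 ≤ σ ^ 2 * H := mul_nonneg (sq_nonneg σ) hH.1.le
  rw [hlimit, hdiff, abs_mul, abs_of_nonneg hσH]
  calc σ ^ 2 * H * |X - T| ≤ σ ^ 2 * H * (X + T) :=
        mul_le_mul_of_nonneg_left (abs_sub_le_iff.2 ⟨by linarith, by linarith⟩) hσH
    _ ≤ σ ^ 2 * H * ((2 * (2 * H)) ^ (2 * H) / (2 * H) / lam ^ (2 * H) * exp (-lam * t / 2) +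
          2 ^ (2 * H) * Gamma (2 * H) / lam ^ (2 * H) * exp (-lam * t / 2)) :=
        mul_le_mul_of_nonneg_left (add_le_add hX hT) hσH
    _ = _ := by ring
end

section
/- Let f : [0,T] → V be continuous into a Banach space V, let λ > 0, and suppose there exists a control ω with ω(0,T) finite such that whenever ω(s,t)^{1/p} ≤ 1/(4λ) one has ‖f‖_{p-var,[s,t]}^p ≤ ω(s,t). Then ‖f‖_{p-var,[0,T]}^p ≤ C(λ, p) (1 + ω(0,T))^p, i.e., finite p-variation on small intervals characterized by a smallness condition on a control propagates to finite global p-variation with an explicit polynomial bound in ω(0,T). -/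
/-!
Call an increment `[a, b]` small when `ω a b ≤ ε ^ p`, where `ε = 1 / (4λ)`; on a small increment the
hypothesis gives `‖f b - f a‖ ^ p ≤ ω a b` directly. A large increment is cut, by the intermediate
value theorem applied to `t ↦ ω a t`, into at most `ω a b / ε ^ p + 1` consecutive small ones, so by
superadditivity and the triangle inequality `‖f b - f a‖ ≤ ε (1 + ω a b / ε ^ p) ≤ (2 ε / ε ^ p) ω a b`.
Hence every increment of a partition satisfies `‖Δf‖ ^ p ≤ ω + K ω ^ p` with `K = (2 ε / ε ^ p) ^ p`,
and summing, using superadditivity of `ω` and of `x ↦ x ^ p`, bounds the p-variation sum by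
`ω 0 T + K (ω 0 T) ^ p`.
-/

open Finset Set

lemma sum_rpow_le_rpow_sum {ι : Type*} (s : Finset ι) {x : ι → ℝ} {p : ℝ}
    (hx : ∀ i ∈ s, 0 ≤ x i) (hp : 1 ≤ p) :
    ∑ i ∈ s, x i ^ p ≤ (∑ i ∈ s, x i) ^ p := by
  induction s using Finset.cons_induction with
  | empty => simp [Real.zero_rpow (by linarith : p ≠ 0)]
  | cons a s ha ih =>
    rw [sum_cons, sum_cons]
    have hxs : ∀ i ∈ s, 0 ≤ x i := fun i hi => hx i (mem_cons_of_mem hi)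
    calc x a ^ p + ∑ i ∈ s, x i ^ p ≤ x a ^ p + (∑ i ∈ s, x i) ^ p := by gcongr; exact ih hxs
      _ ≤ (x a + ∑ i ∈ s, x i) ^ p :=
        Real.add_rpow_le_rpow_add (hx a (mem_cons_self a s)) (sum_nonneg hxs) hp

lemma add_mul_rpow_le_mul_one_add_rpow {x c p : ℝ} (hx : 0 ≤ x) (hc : 0 ≤ c) (hp : 1 ≤ p) :
    x + c * x ^ p ≤ (1 + c) * (1 + x) ^ p := by
  have hx_le : x ≤ (1 + x) ^ p :=
    calc x ≤ 1 + x := by linarith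
      _ = (1 + x) ^ (1 : ℝ) := (Real.rpow_one _).symm
      _ ≤ (1 + x) ^ p := Real.rpow_le_rpow_of_exponent_le (by linarith) hp
  have hxp_le : x ^ p ≤ (1 + x) ^ p := by gcongr; linarith
  nlinarith

def SuperadditiveOn (ω : ℝ → ℝ → ℝ) (T : ℝ) : Prop :=
  ∀ s u t, 0 ≤ s → s ≤ u → u ≤ t → t ≤ T → ω s u + ω u t ≤ ω s t

namespace SuperadditiveOn

variable {ω : ℝ → ℝ → ℝ} {T : ℝ}

lemma le_zero_T (hsup : SuperadditiveOn ω T) (hωnn : ∀ s t, 0 ≤ ω s t) {s t : ℝ}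
    (hs : 0 ≤ s) (hst : s ≤ t) (ht : t ≤ T) : ω s t ≤ ω 0 T := by
  have h₁ := hsup 0 s t le_rfl hs hst ht
  have h₂ := hsup 0 t T le_rfl (hs.trans hst) ht le_rfl
  linarith [hωnn 0 s, hωnn t T]

lemma sum_range_le (hsup : SuperadditiveOn ω T) (hω0 : ∀ s, ω s s = 0) {u : ℕ → ℝ}
    (hu : Monotone u) {n : ℕ} (hmem : ∀ i ≤ n, u i ∈ Icc 0 T) :
    ∑ i ∈ range n, ω (u i) (u (i + 1)) ≤ ω (u 0) (u n) := by
  induction n with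
  | zero => simp [hω0]
  | succ n ih =>
    rw [sum_range_succ]
    have := hsup (u 0) (u n) (u (n + 1)) (hmem 0 (by omega)).1 (hu (Nat.zero_le n))
      (hu n.le_succ) (hmem (n + 1) le_rfl).2
    linarith [ih fun i hi => hmem i (by omega)]

lemma sum_range_le_zero_T (hsup : SuperadditiveOn ω T) (hω0 : ∀ s, ω s s = 0)
    (hωnn : ∀ s t, 0 ≤ ω s t) {u : ℕ → ℝ} (hu : Monotone u) {n : ℕ}
    (hmem : ∀ i ≤ n, u i ∈ Icc 0 T) :
    ∑ i ∈ range n, ω (u i) (u (i + 1)) ≤ ω 0 T :=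
  (hsup.sum_range_le hω0 hu hmem).trans <|
    hsup.le_zero_T hωnn (hmem 0 (Nat.zero_le n)).1 (hu (Nat.zero_le n)) (hmem n le_rfl).2

end SuperadditiveOn

section Increments

variable {V : Type*} [SeminormedAddCommGroup V] {f : ℝ → V} {ω : ℝ → ℝ → ℝ} {T : ℝ}

lemma norm_sub_rpow_le_of_partition_sum_le {s t p B : ℝ} (hst : s ≤ t)
    (h : ∀ (n : ℕ) (u : ℕ → ℝ), Monotone u → (∀ i ≤ n, u i ∈ Icc s t) →
      ∑ i ∈ range n, ‖f (u (i + 1)) - f (u i)‖ ^ p ≤ B) :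
    ‖f t - f s‖ ^ p ≤ B := by
  have hu : Monotone fun i : ℕ => if i = 0 then s else t :=
    monotone_nat_of_le_succ fun i => by rcases i with _ | _ <;> simp [hst]
  simpa using h 1 _ hu fun i hi => by interval_cases i <;> simp [hst]

lemma norm_sub_le_of_le_nat_succ_mul (hω0 : ∀ s, ω s s = 0) (hsup : SuperadditiveOn ω T)
    (hcont : ContinuousOn (Function.uncurry ω) (Icc 0 T ×ˢ Icc 0 T)) {δ ε : ℝ}
    (hδ : 0 ≤ δ) (hε : 0 ≤ ε)
    (hloc : ∀ s t, 0 ≤ s → s ≤ t → t ≤ T → ω s t ≤ δ → ‖f t - f s‖ ≤ ε) (k : ℕ) :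
    ∀ a b, 0 ≤ a → a ≤ b → b ≤ T → ω a b ≤ (k + 1) * δ → ‖f b - f a‖ ≤ (k + 1) * ε := by
  induction k with
  | zero => simpa using hloc
  | succ k ih =>
    intro a b ha hab hb hωab
    push_cast at hωab ⊢
    by_cases hsmall : ω a b ≤ δ
    · have := hloc a b ha hab hb hsmall
      nlinarith
    have hcont_a : ContinuousOn (ω a) (Icc a b) :=
      hcont.comp (continuousOn_const.prodMk continuousOn_id) fun t ht =>
        ⟨⟨ha, hab.trans hb⟩, ha.trans ht.1, ht.2.trans hb⟩
    obtain ⟨c, ⟨hac, hcb⟩, hωac⟩ :=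
      intermediate_value_Icc hab hcont_a ⟨(hω0 a).symm ▸ hδ, (not_le.1 hsmall).le⟩
    have hωcb : ω c b ≤ (k + 1) * δ := by
      linarith [hsup a c b ha hac hcb hb]
    calc ‖f b - f a‖ = ‖(f b - f c) + (f c - f a)‖ := by rw [sub_add_sub_cancel]
      _ ≤ ‖f b - f c‖ + ‖f c - f a‖ := norm_add_le _ _
      _ ≤ (k + 1) * ε + ε := add_le_add (ih c b (ha.trans hac) hcb hb hωcb)
          (hloc a c ha hac (hcb.trans hb) hωac.le)
      _ = (k + 1 + 1) * ε := by ring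

lemma norm_sub_le_mul_one_add_div (hω0 : ∀ s, ω s s = 0) (hsup : SuperadditiveOn ω T)
    (hcont : ContinuousOn (Function.uncurry ω) (Icc 0 T ×ˢ Icc 0 T)) {δ ε : ℝ}
    (hδ : 0 < δ) (hε : 0 ≤ ε)
    (hloc : ∀ s t, 0 ≤ s → s ≤ t → t ≤ T → ω s t ≤ δ → ‖f t - f s‖ ≤ ε)
    {a b : ℝ} (ha : 0 ≤ a) (hab : a ≤ b) (hb : b ≤ T) (hωab : 0 ≤ ω a b) :
    ‖f b - f a‖ ≤ ε * (1 + ω a b / δ) := by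
  set k := ⌊ω a b / δ⌋₊
  have hk : ω a b ≤ (k + 1) * δ := by
    rw [← div_le_iff₀ hδ]; exact (Nat.lt_floor_add_one _).le
  have hk' : (k : ℝ) ≤ ω a b / δ := Nat.floor_le (div_nonneg hωab hδ.le)
  calc ‖f b - f a‖ ≤ (k + 1) * ε :=
        norm_sub_le_of_le_nat_succ_mul hω0 hsup hcont hδ.le hε hloc k a b ha hab hb hk
    _ ≤ ε * (1 + ω a b / δ) := by nlinarith

lemma norm_sub_rpow_le_add_mul_rpow (hω0 : ∀ s, ω s s = 0) (hωnn : ∀ s t, 0 ≤ ω s t)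
    (hsup : SuperadditiveOn ω T)
    (hcont : ContinuousOn (Function.uncurry ω) (Icc 0 T ×ˢ Icc 0 T)) {ε p : ℝ}
    (hε : 0 < ε) (hp : 0 < p)
    (hsmall : ∀ s t, 0 ≤ s → s ≤ t → t ≤ T → ω s t ≤ ε ^ p → ‖f t - f s‖ ^ p ≤ ω s t)
    {a b : ℝ} (ha : 0 ≤ a) (hab : a ≤ b) (hb : b ≤ T) :
    ‖f b - f a‖ ^ p ≤ ω a b + (2 * ε / ε ^ p) ^ p * ω a b ^ p := by
  have hεp : 0 < ε ^ p := Real.rpow_pos_of_pos hε p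
  by_cases hωab : ω a b ≤ ε ^ p
  · exact le_add_of_le_of_nonneg (hsmall a b ha hab hb hωab)
      (mul_nonneg (by positivity) (Real.rpow_nonneg (hωnn a b) p))
  have hloc : ∀ s t, 0 ≤ s → s ≤ t → t ≤ T → ω s t ≤ ε ^ p → ‖f t - f s‖ ≤ ε :=
    fun s t hs hst ht hωst => (Real.rpow_le_rpow_iff (norm_nonneg _) hε.le hp).1 <|
      (hsmall s t hs hst ht hωst).trans hωst
  have hlarge : 1 < ω a b / ε ^ p := (one_lt_div hεp).2 (not_le.1 hωab)
  have hnorm : ‖f b - f a‖ ≤ 2 * ε / ε ^ p * ω a b :=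
    calc ‖f b - f a‖ ≤ ε * (1 + ω a b / ε ^ p) :=
          norm_sub_le_mul_one_add_div hω0 hsup hcont hεp hε.le hloc ha hab hb (hωnn a b)
      _ ≤ ε * (2 * (ω a b / ε ^ p)) := by gcongr; linarith
      _ = 2 * ε / ε ^ p * ω a b := by ring
  calc ‖f b - f a‖ ^ p ≤ (2 * ε / ε ^ p * ω a b) ^ p := by gcongr
    _ = (2 * ε / ε ^ p) ^ p * ω a b ^ p := Real.mul_rpow (by positivity) (hωnn a b)
    _ ≤ ω a b + (2 * ε / ε ^ p) ^ p * ω a b ^ p := le_add_of_nonneg_left (hωnn a b)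

end Increments

/-- Local-to-global p-variation estimate: if, whenever a control ω satisfies the
smallness condition ω(s,t)^{1/p} ≤ 1/(4λ), the p-variation of f on [s,t] is bounded
by ω(s,t), then the global p-variation of f on [0,T] is bounded by
C(λ,p) (1 + ω(0,T))^p. p-variation bounds are expressed via partition sums. -/
theorem stmt14 (lam p : ℝ) (hlam : 0 < lam) (hp : 1 ≤ p) :
    ∃ C > 0, ∀ (T : ℝ), 0 < T → ∀ (ω : ℝ → ℝ → ℝ),
      (∀ s, ω s s = 0) → (∀ s t, 0 ≤ ω s t) →
      (∀ s u t, 0 ≤ s → s ≤ u → u ≤ t → t ≤ T → ω s u + ω u t ≤ ω s t) →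
      ContinuousOn (Function.uncurry ω) (Set.Icc 0 T ×ˢ Set.Icc 0 T) →
      ∀ (V : Type) [NormedAddCommGroup V] (f : ℝ → V), ContinuousOn f (Set.Icc 0 T) →
      (∀ s t, 0 ≤ s → s ≤ t → t ≤ T → ω s t ^ (1 / p) ≤ 1 / (4 * lam) →
        ∀ (n : ℕ) (u : ℕ → ℝ), Monotone u → (∀ i ≤ n, u i ∈ Set.Icc s t) →
          ∑ i ∈ Finset.range n, ‖f (u (i + 1)) - f (u i)‖ ^ p ≤ ω s t) →
      ∀ (n : ℕ) (u : ℕ → ℝ), Monotone u → (∀ i ≤ n, u i ∈ Set.Icc (0:ℝ) T) →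
        ∑ i ∈ Finset.range n, ‖f (u (i + 1)) - f (u i)‖ ^ p ≤ C * (1 + ω 0 T) ^ p := by
  set ε : ℝ := 1 / (4 * lam)
  have hε : 0 < ε := by positivity
  have hp0 : 0 < p := one_pos.trans_le hp
  set K : ℝ := (2 * ε / ε ^ p) ^ p
  refine ⟨1 + K, by positivity, ?_⟩
  intro T _ ω hω0 hωnn hsup hcont V _ f _ hloc n u hu hmem
  have hsmall (s t : ℝ) (hs : 0 ≤ s) (hst : s ≤ t) (ht : t ≤ T) (hωst : ω s t ≤ ε ^ p) :
      ‖f t - f s‖ ^ p ≤ ω s t := by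
    refine norm_sub_rpow_le_of_partition_sum_le hst (hloc s t hs hst ht ?_)
    rwa [one_div p, Real.rpow_inv_le_iff_of_pos (hωnn s t) hε.le hp0]
  have hincr (i : ℕ) (hi : i ∈ range n) :
      ‖f (u (i + 1)) - f (u i)‖ ^ p ≤ ω (u i) (u (i + 1)) + K * ω (u i) (u (i + 1)) ^ p := by
    have hi : i < n := mem_range.1 hi
    exact norm_sub_rpow_le_add_mul_rpow hω0 hωnn hsup hcont hε hp0 hsmall
      (hmem i hi.le).1 (hu i.le_succ) (hmem (i + 1) hi).2
  have hΩ := SuperadditiveOn.sum_range_le_zero_T hsup hω0 hωnn hu hmem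
  have hΩp : ∑ i ∈ range n, ω (u i) (u (i + 1)) ^ p ≤ ω 0 T ^ p :=
    (sum_rpow_le_rpow_sum _ (fun i _ => hωnn _ _) hp).trans <|
      Real.rpow_le_rpow (sum_nonneg fun i _ => hωnn _ _) hΩ hp0.le
  calc ∑ i ∈ range n, ‖f (u (i + 1)) - f (u i)‖ ^ p
      ≤ ∑ i ∈ range n, ω (u i) (u (i + 1)) + K * ∑ i ∈ range n, ω (u i) (u (i + 1)) ^ p := by
        rw [mul_sum, ← sum_add_distrib]; exact sum_le_sum hincr
    _ ≤ ω 0 T + K * ω 0 T ^ p := add_le_add hΩ (mul_le_mul_of_nonneg_left hΩp (by positivity))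
    _ ≤ (1 + K) * (1 + ω 0 T) ^ p :=
        add_mul_rpow_le_mul_one_add_rpow (hωnn 0 T) (by positivity) hp
end
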